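/- For a partition λ of r, every homomorphism in Hom_H^∧(M^λ, M^μ) with λ ◁ μ annihilates the Specht module S^λ; consequently the composition d_0^λ ∘ d_1^λ in the chain complex C̃_*^λ is zero. -/

import Mathlib

open Equiv Finset

noncomputable section

/-- Coxeter length of a permutation of `Fin r` = number of inversions. -/
def permLength {r : ℕ} (w : Equiv.Perm (Fin r)) : ℕ :=
  (Finset.univ.filter (fun p : Fin r × Fin r => p.1 < p.2 ∧ w p.2 < w p.1)).card

/-- the simple transpositions `(i, i+1)`. -/
def IsSimpleTransposition {r : ℕ} (s : Equiv.Perm (Fin r)) : Prop :=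
  ∃ (i : ℕ) (h : i + 1 < r), s = Equiv.swap ⟨i, Nat.lt_of_succ_lt h⟩ ⟨i + 1, h⟩

/-- strong Bruhat order: `u ⊴ v` iff `u` is the product of a sublist of a reduced word for `v`. -/
def BruhatLE {r : ℕ} (u v : Equiv.Perm (Fin r)) : Prop :=
  ∃ L : List (Equiv.Perm (Fin r)),
    (∀ s ∈ L, IsSimpleTransposition s) ∧ L.prod = v ∧ L.length = permLength v ∧
      ∃ L' : List (Equiv.Perm (Fin r)), L'.Sublist L ∧ L'.prod = u

def partialSum (f : ℕ → ℕ) (e : ℕ) : ℕ := ∑ j ∈ Finset.range e, f j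

/-- a composition of `r`: a (finitely supported) sequence of non-negative integers summing to `r`. -/
def IsCompositionOf (f : ℕ → ℕ) (r : ℕ) : Prop :=
  (Function.support f).Finite ∧ ∑ᶠ i, f i = r

/-- dominance order on compositions: `DomLE f g` means `f ⊴ g`. -/
def DomLE (f g : ℕ → ℕ) : Prop := ∀ e : ℕ, partialSum f e ≤ partialSum g e

/-- (0-indexed) row of the box `b` in the Young diagram of the composition `f`,
boxes being numbered `0, 1, 2, …` along the rows. -/
def rowIndex {r : ℕ} (f : ℕ → ℕ) (b : Fin r) : ℕ :=
  sInf {i : ℕ | (b : ℕ) < partialSum f (i + 1)}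

/-- the Young (standard parabolic) subgroup `W_f`, as a set of permutations. -/
def YoungSubgroup {r : ℕ} (f : ℕ → ℕ) : Set (Equiv.Perm (Fin r)) :=
  {w | ∀ b : Fin r, rowIndex f (w b) = rowIndex f b}

/-- `W_{f,g}`; positions are acted on on the right, `(b)w = w⁻¹ b`. -/
def Wlm {r : ℕ} (f g : ℕ → ℕ) : Set (Equiv.Perm (Fin r)) :=
  {w | ∀ (i : ℕ) (b : Fin r), i ≤ rowIndex f b → i ≤ rowIndex g (w⁻¹ b)}

/-- `D_f`: minimal length representatives of the cosets `W_f d`. -/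
def minimalCosetReps {r : ℕ} (f : ℕ → ℕ) : Set (Equiv.Perm (Fin r)) :=
  {d | ∀ π ∈ YoungSubgroup (r := r) f, permLength d ≤ permLength (π * d)}

/-- a tableau of shape `f` is encoded by its entry function, a permutation of the boxes;
the tableau `t^f d` corresponds to the entry function `d⁻¹`. -/
def IsRowStandard {r : ℕ} (f : ℕ → ℕ) (t : Equiv.Perm (Fin r)) : Prop :=
  ∀ b₁ b₂ : Fin r, rowIndex f b₁ = rowIndex f b₂ → b₁ < b₂ → t b₁ < t b₂

/-- generalized tableaux are functions `Fin r → ℕ`; content `g` (0-indexed entries). -/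
def HasContent {r : ℕ} (g : ℕ → ℕ) (T : Fin r → ℕ) : Prop :=
  ∀ i : ℕ, (Finset.univ.filter (fun b => T b = i)).card = g i

def IsRowSemistandard {r : ℕ} (f : ℕ → ℕ) (T : Fin r → ℕ) : Prop :=
  ∀ b₁ b₂ : Fin r, rowIndex f b₁ = rowIndex f b₂ → b₁ ≤ b₂ → T b₁ ≤ T b₂

/-- ascending: every entry in row `i` is `≥ i`. -/
def IsAscending {r : ℕ} (f : ℕ → ℕ) (T : Fin r → ℕ) : Prop :=
  ∀ b : Fin r, rowIndex f b ≤ T b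

/-- `T^λ_g`: the boxes filled in the natural order with `g 0` zeroes, `g 1` ones, … -/
def stdTableau {r : ℕ} (g : ℕ → ℕ) : Fin r → ℕ := fun b => rowIndex g b

/-- conjugate (dual) of a partition. -/
def conjFn (l : ℕ → ℕ) : ℕ → ℕ := fun i => Nat.card {k : ℕ | i + 1 ≤ l k}

/-- (row, column) coordinates of box `b` in the diagram of `f`. -/
def boxPlace {r : ℕ} (f : ℕ → ℕ) (b : Fin r) : ℕ × ℕ :=
  (rowIndex f b, (b : ℕ) - partialSum f (rowIndex f b))

section LengthBasics

variable {r : ℕ}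

open Equiv Finset

/-- the inversion set as a Finset -/
def invSet {r : ℕ} (w : Equiv.Perm (Fin r)) : Finset (Fin r × Fin r) :=
  Finset.univ.filter (fun p : Fin r × Fin r => p.1 < p.2 ∧ w p.2 < w p.1)

lemma permLength_eq_card (w : Equiv.Perm (Fin r)) : permLength w = (invSet w).card := rfl

lemma strictMono_le_apply' {r : ℕ} (f : Fin r → Fin r) (h : StrictMono f) :
    ∀ n (hb : n < r), n ≤ (f ⟨n, hb⟩ : ℕ) := by
  intro n
  induction n with
  | zero => intro hb; omega
  | succ n ih =>
    intro hb
    have hb' : n < r := by omega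
    have hlt : (⟨n, hb'⟩ : Fin r) < ⟨n+1, hb⟩ := by simp [Fin.lt_def]
    have h3 : (f ⟨n, hb'⟩ : ℕ) < (f ⟨n+1, hb⟩ : ℕ) := h hlt
    have := ih hb'
    omega

lemma strictMono_le_apply {r : ℕ} (f : Fin r → Fin r) (h : StrictMono f) (a : Fin r) :
    (a : ℕ) ≤ (f a : ℕ) := by
  have := strictMono_le_apply' f h a.val a.isLt
  simpa using this

lemma permLength_one : permLength (1 : Equiv.Perm (Fin r)) = 0 := by
  rw [permLength_eq_card, Finset.card_eq_zero, invSet, Finset.filter_eq_empty_iff]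
  intro p _
  simp only [Equiv.Perm.one_apply, not_and]
  intro h
  exact lt_asymm h

/-- a permutation with no adjacent descent is the identity -/
lemma eq_one_of_no_descent (w : Equiv.Perm (Fin r))
    (h : ∀ i : ℕ, ∀ hi : i + 1 < r, w ⟨i, Nat.lt_of_succ_lt hi⟩ < w ⟨i+1, hi⟩) :
    w = 1 := by
  have hmono : StrictMono w := by
    have key : ∀ k : ℕ, ∀ a : Fin r, ∀ hk : (a : ℕ) + k < r, w a < w ⟨(a : ℕ) + k + 0, by omega⟩ ∨ k = 0 := by
      intro k
      induction k with
      | zero => intro a hk; right; rfl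
      | succ n ih =>
        intro a hk
        left
        have h1 : (a : ℕ) + n < r := by omega
        rcases ih a h1 with h2 | h2
        · have := h ((a : ℕ) + n) (by omega)
          have : w ⟨(a:ℕ) + n, by omega⟩ < w ⟨(a:ℕ)+n+1, by omega⟩ := by
            exact h ((a : ℕ) + n) (by omega)
          simp only [Nat.add_zero] at h2 ⊢
          calc w a < w ⟨(a:ℕ)+n, by omega⟩ := h2
            _ < w ⟨(a:ℕ)+n+1, by omega⟩ := this
        · subst h2
          simpa using h (a : ℕ) (by simpa using hk)
    intro a b hab
    have hk : (a : ℕ) + ((b : ℕ) - (a : ℕ)) < r := by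
      have := b.isLt; have : (a:ℕ) < (b:ℕ) := hab; omega
    rcases key ((b : ℕ) - (a : ℕ)) a hk with h2 | h2
    · have : (⟨(a:ℕ) + ((b:ℕ) - (a:ℕ)) + 0, by omega⟩ : Fin r) = b := by
        ext; simp; have : (a:ℕ) < (b:ℕ) := hab; omega
      rwa [this] at h2
    · exfalso; have : (a:ℕ) < (b:ℕ) := hab; omega
  -- strictMono bijection of Fin r is id
  have h1 : ∀ a : Fin r, (a : ℕ) ≤ w a := fun a => strictMono_le_apply w hmono a
  have hmono' : StrictMono (w⁻¹ : Equiv.Perm (Fin r)) := by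
    intro a b hab
    rcases lt_trichotomy ((w⁻¹ : Equiv.Perm (Fin r)) a) ((w⁻¹ : Equiv.Perm (Fin r)) b) with h2 | h2 | h2
    · exact h2
    · exfalso
      have h3 : a = b := by
        have := congrArg w h2
        simpa using this
      exact absurd h3 (ne_of_lt hab)
    · exfalso
      have h4 := hmono h2
      simp only [Equiv.Perm.inv_def, Equiv.apply_symm_apply] at h4
      exact lt_asymm hab h4
  have h2 : ∀ a : Fin r, (a : ℕ) ≤ w⁻¹ a := fun a => strictMono_le_apply _ hmono' a
  ext a
  have := h1 a
  have := h2 (w a)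
  simp at this
  have : (w a : ℕ) = a := by
    have h3 : (a : ℕ) ≤ w a := h1 a
    have h4 : ((w a : Fin r) : ℕ) ≤ a := by exact_mod_cast this
    omega
  simpa using this

lemma descent_exists (w : Equiv.Perm (Fin r)) (hw : w ≠ 1) :
    ∃ (i : ℕ) (hi : i + 1 < r), w ⟨i+1, hi⟩ < w ⟨i, Nat.lt_of_succ_lt hi⟩ := by
  by_contra hc
  push_neg at hc
  apply hw
  apply eq_one_of_no_descent
  intro i hi
  have := hc i hi
  rcases lt_or_eq_of_le this with h | h
  · exact h
  · exfalso
    have := w.injective h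
    simp [Fin.ext_iff] at this
  

lemma permLength_eq_zero_iff (w : Equiv.Perm (Fin r)) : permLength w = 0 ↔ w = 1 := by
  constructor
  · intro h
    by_contra hc
    obtain ⟨i, hi, hd⟩ := descent_exists w hc
    have hmem : (⟨⟨i, Nat.lt_of_succ_lt hi⟩, ⟨i+1, hi⟩⟩ : Fin r × Fin r) ∈ invSet w := by
      simp only [invSet, Finset.mem_filter, Finset.mem_univ, true_and]
      exact ⟨by simp [Fin.lt_def], hd⟩
    have : (invSet w).card ≠ 0 := Finset.card_ne_zero_of_mem hmem
    exact this h
  · rintro rfl; exact permLength_one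

lemma permLength_inv (w : Equiv.Perm (Fin r)) : permLength w⁻¹ = permLength w := by
  rw [permLength_eq_card, permLength_eq_card]
  apply Finset.card_nbij (fun p => (w⁻¹ p.2, w⁻¹ p.1))
  · intro p hp
    simp [invSet] at hp ⊢
    exact ⟨hp.2, by simpa using hp.1⟩
  · intro p hp q hq h
    simp only [Prod.mk.injEq] at h
    have h1 := w⁻¹.injective h.1
    have h2 := w⁻¹.injective h.2
    exact Prod.ext h2 h1
  · intro p hp
    simp only [Finset.coe_filter, Set.mem_setOf_eq, invSet, Finset.mem_coe, Finset.mem_filter] at hp ⊢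
    refine ⟨(w p.2, w p.1), ?_, ?_⟩
    · simp
      exact ⟨hp.2.2, by simpa using hp.2.1⟩
    · simp

end LengthBasics
section StepLemma

open Equiv Finset

variable {r : ℕ}

lemma swap_val_eq {r : ℕ} (i : ℕ) (hi : i + 1 < r) (x : Fin r) :
    ((Equiv.swap (⟨i, Nat.lt_of_succ_lt hi⟩ : Fin r) ⟨i+1, hi⟩ x : Fin r) : ℕ) =
      if (x:ℕ) = i then i+1 else if (x:ℕ) = i+1 then i else (x:ℕ) := by
  rw [Equiv.swap_apply_def]
  split_ifs with h1 h2 h3 h4 <;> simp_all [Fin.ext_iff]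

lemma swap_order_pres {r : ℕ} (i : ℕ) (hi : i + 1 < r) (p1 p2 : Fin r)
    (h12 : p1 < p2) (hne : ¬((p1:ℕ) = i ∧ (p2:ℕ) = i+1)) :
    Equiv.swap (⟨i, Nat.lt_of_succ_lt hi⟩ : Fin r) ⟨i+1, hi⟩ p1 <
      Equiv.swap (⟨i, Nat.lt_of_succ_lt hi⟩ : Fin r) ⟨i+1, hi⟩ p2 := by
  have e1 := swap_val_eq i hi p1
  have e2 := swap_val_eq i hi p2
  rw [Fin.lt_def] at h12 ⊢
  rw [e1, e2]
  split_ifs <;> omega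

lemma invSet_erase_card (w : Equiv.Perm (Fin r)) (i : ℕ) (hi : i + 1 < r) :
    ((invSet (w * Equiv.swap (⟨i, Nat.lt_of_succ_lt hi⟩ : Fin r) ⟨i+1, hi⟩)).erase
        (⟨i, Nat.lt_of_succ_lt hi⟩, ⟨i+1, hi⟩)).card =
    ((invSet w).erase ((⟨i, Nat.lt_of_succ_lt hi⟩ : Fin r), (⟨i+1, hi⟩ : Fin r))).card := by
  set a : Fin r := ⟨i, Nat.lt_of_succ_lt hi⟩ with ha
  set b : Fin r := ⟨i+1, hi⟩ with hb
  set s := Equiv.swap a b with hs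
  have hss : ∀ x : Fin r, s (s x) = x := by
    intro x; simp [hs]
  have hsa : s a = b := Equiv.swap_apply_left a b
  have hsb : s b = a := Equiv.swap_apply_right a b
  have hab : a < b := by simp [ha, hb, Fin.lt_def]
  have key : ∀ p : Fin r × Fin r, p.1 < p.2 → p ≠ (a, b) → s p.1 < s p.2 := by
    intro p h12 hne
    apply swap_order_pres i hi p.1 p.2 h12
    rintro ⟨u1, u2⟩
    exact hne (Prod.ext (by ext; exact u1) (by ext; exact u2))
  apply Finset.card_nbij (fun p => (s p.1, s p.2))
  · intro p hp
    rw [Finset.mem_coe, Finset.mem_erase] at hp ⊢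
    obtain ⟨hpne, hp⟩ := hp
    simp only [invSet, Finset.mem_filter, Finset.mem_univ, true_and] at hp
    simp only [Equiv.Perm.mul_apply] at hp
    constructor
    · intro hc
      rw [Prod.ext_iff] at hc
      have h1 : p.1 = b := by
        have := congrArg s hc.1; rwa [hss, hsa] at this
      have h2 : p.2 = a := by
        have := congrArg s hc.2; rwa [hss, hsb] at this
      rw [h1, h2] at hp
      exact absurd hp.1 (lt_asymm hab)
    · simp only [invSet, Finset.mem_filter, Finset.mem_univ, true_and]
      exact ⟨key p hp.1 hpne, by simpa [hss] using hp.2⟩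
  · intro p _ q _ h
    simp only [Prod.mk.injEq] at h
    have h1 := (Equiv.injective s) h.1
    have h2 := (Equiv.injective s) h.2
    exact Prod.ext h1 h2
  · intro q hq
    simp only [Finset.coe_erase, Set.mem_diff, Finset.mem_coe, Set.mem_singleton_iff] at hq
    obtain ⟨hq, hqne⟩ := hq
    simp only [invSet, Finset.mem_filter, Finset.mem_univ, true_and] at hq
    refine ⟨(s q.1, s q.2), ?_, by simp [hss]⟩
    rw [Finset.mem_coe, Finset.mem_erase]
    constructor
    · intro hc
      rw [Prod.ext_iff] at hc
      have h1 : q.1 = b := by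
        have := congrArg s hc.1; rwa [hss, hsa] at this
      have h2 : q.2 = a := by
        have := congrArg s hc.2; rwa [hss, hsb] at this
      rw [h1, h2] at hq
      exact absurd hq.1 (lt_asymm hab)
    · simp only [invSet, Finset.mem_filter, Finset.mem_univ, true_and]
      simp only [Equiv.Perm.mul_apply]
      exact ⟨key q hq.1 hqne, by simpa [hss] using hq.2⟩

/-- The fundamental step lemma: right multiplication by an adjacent transposition. -/
lemma permLength_mul_swap (w : Equiv.Perm (Fin r)) (i : ℕ) (hi : i + 1 < r) :
    (w ⟨i, Nat.lt_of_succ_lt hi⟩ < w ⟨i+1, hi⟩ →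
      permLength (w * Equiv.swap (⟨i, Nat.lt_of_succ_lt hi⟩ : Fin r) ⟨i+1, hi⟩) = permLength w + 1) ∧
    (w ⟨i+1, hi⟩ < w ⟨i, Nat.lt_of_succ_lt hi⟩ →
      permLength (w * Equiv.swap (⟨i, Nat.lt_of_succ_lt hi⟩ : Fin r) ⟨i+1, hi⟩) + 1 = permLength w) := by
  set a : Fin r := ⟨i, Nat.lt_of_succ_lt hi⟩ with ha
  set b : Fin r := ⟨i+1, hi⟩ with hb
  set s := Equiv.swap a b with hs
  have hab : a < b := by simp [ha, hb, Fin.lt_def]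
  have hcard := invSet_erase_card w i hi
  have hmem1 : (a, b) ∈ invSet (w * s) ↔ w a < w b := by
    simp only [invSet, Finset.mem_filter, Finset.mem_univ, true_and]
    simp only [Equiv.Perm.mul_apply]
    rw [Equiv.swap_apply_left, Equiv.swap_apply_right]
    exact ⟨fun h => h.2, fun h => ⟨hab, h⟩⟩
  have hmem2 : (a, b) ∈ invSet w ↔ w b < w a := by
    simp only [invSet, Finset.mem_filter, Finset.mem_univ, true_and]
    exact ⟨fun h => h.2, fun h => ⟨hab, h⟩⟩
  constructor
  · intro hlt
    rw [permLength_eq_card, permLength_eq_card]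
    have h1 : (a, b) ∈ invSet (w * s) := hmem1.mpr hlt
    have h2 : (a, b) ∉ invSet w := fun h => lt_asymm hlt (hmem2.mp h)
    rw [← Finset.card_erase_add_one h1, hcard, Finset.erase_eq_of_notMem h2]
  · intro hlt
    rw [permLength_eq_card, permLength_eq_card]
    have h1 : (a, b) ∉ invSet (w * s) := fun h => lt_asymm hlt (hmem1.mp h)
    have h2 : (a, b) ∈ invSet w := hmem2.mpr hlt
    rw [← Finset.card_erase_add_one h2, ← hcard, Finset.erase_eq_of_notMem h1]

end StepLemma
section LengthArith

open Equiv Finset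

variable {r : ℕ}

/-- abbreviation for the simple transposition -/
def sw {r : ℕ} (i : ℕ) (hi : i + 1 < r) : Equiv.Perm (Fin r) :=
  Equiv.swap (⟨i, Nat.lt_of_succ_lt hi⟩ : Fin r) ⟨i+1, hi⟩

lemma sw_isSimple (i : ℕ) (hi : i + 1 < r) : IsSimpleTransposition (sw i hi) :=
  ⟨i, hi, rfl⟩

lemma sw_mul_self (i : ℕ) (hi : i + 1 < r) : sw i hi * sw i hi = 1 := by
  rw [sw]; exact Equiv.swap_mul_self _ _

lemma sw_inv (i : ℕ) (hi : i + 1 < r) : (sw i hi)⁻¹ = sw i hi := by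
  rw [sw]; exact Equiv.swap_inv _ _

lemma sw_ne_one (i : ℕ) (hi : i + 1 < r) : sw i hi ≠ 1 := by
  intro hc
  have := congrArg (fun (e : Equiv.Perm (Fin r)) => e ⟨i, Nat.lt_of_succ_lt hi⟩) hc
  simp only [sw, Equiv.swap_apply_left, Equiv.Perm.one_apply] at this
  simp [Fin.ext_iff] at this

lemma len_sw_cases (w : Equiv.Perm (Fin r)) (i : ℕ) (hi : i + 1 < r) :
    (w ⟨i, Nat.lt_of_succ_lt hi⟩ < w ⟨i+1, hi⟩ ∧
      permLength (w * sw i hi) = permLength w + 1) ∨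
    (w ⟨i+1, hi⟩ < w ⟨i, Nat.lt_of_succ_lt hi⟩ ∧
      permLength (w * sw i hi) + 1 = permLength w) := by
  have hstep := permLength_mul_swap w i hi
  rcases lt_trichotomy (w ⟨i, Nat.lt_of_succ_lt hi⟩) (w ⟨i+1, hi⟩) with h | h | h
  · exact Or.inl ⟨h, hstep.1 h⟩
  · exfalso
    have := w.injective h
    simp [Fin.ext_iff] at this
  · exact Or.inr ⟨h, hstep.2 h⟩

lemma len_sw_left_cases (w : Equiv.Perm (Fin r)) (i : ℕ) (hi : i + 1 < r) :
    (w⁻¹ ⟨i, Nat.lt_of_succ_lt hi⟩ < w⁻¹ ⟨i+1, hi⟩ ∧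
      permLength (sw i hi * w) = permLength w + 1) ∨
    (w⁻¹ ⟨i+1, hi⟩ < w⁻¹ ⟨i, Nat.lt_of_succ_lt hi⟩ ∧
      permLength (sw i hi * w) + 1 = permLength w) := by
  have key : permLength (sw i hi * w) = permLength (w⁻¹ * sw i hi) := by
    rw [← permLength_inv (w⁻¹ * sw i hi)]
    rw [mul_inv_rev, sw_inv, inv_inv]
  rcases len_sw_cases w⁻¹ i hi with ⟨h1, h2⟩ | ⟨h1, h2⟩
  · left; refine ⟨h1, ?_⟩; rw [key, h2, permLength_inv]
  · right; refine ⟨h1, ?_⟩; rw [key, ← permLength_inv w]; exact h2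

lemma permLength_sw (i : ℕ) (hi : i + 1 < r) : permLength (sw i hi : Equiv.Perm (Fin r)) = 1 := by
  rcases len_sw_cases (1 : Equiv.Perm (Fin r)) i hi with ⟨_, h2⟩ | ⟨h1, _⟩
  · rw [one_mul] at h2; rw [h2, permLength_one]
  · exfalso
    simp only [Equiv.Perm.one_apply, Fin.lt_def] at h1
    omega

lemma permLength_mul_le' : ∀ (n : ℕ) (u v : Equiv.Perm (Fin r)), permLength v = n →
    permLength (u * v) ≤ permLength u + n := by
  intro n
  induction n using Nat.strong_induction_on with
  | _ n ih =>
    intro u v hn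
    rcases eq_or_ne v 1 with rfl | hv
    · rw [permLength_one] at hn
      subst hn
      simp
    · obtain ⟨i, hi, hd⟩ := descent_exists v hv
      rcases len_sw_cases v i hi with ⟨h1, _⟩ | ⟨_, hstep⟩
      · exact absurd hd (lt_asymm h1)
      set v' := v * sw i hi with hv'
      have hvv : v' * sw i hi = v := by rw [hv', mul_assoc, sw_mul_self, mul_one]
      have hlt : permLength v' < n := by omega
      have h3 : permLength (u * v') ≤ permLength u + permLength v' := ih _ hlt u v' rfl
      have h4 : permLength (u * v) ≤ permLength (u * v') + 1 := by
        have he : u * v = (u * v') * sw i hi := by rw [mul_assoc, hvv]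
        rw [he]
        rcases len_sw_cases (u * v') i hi with ⟨_, h⟩ | ⟨_, h⟩ <;> omega
      omega

lemma permLength_mul_le (u v : Equiv.Perm (Fin r)) :
    permLength (u * v) ≤ permLength u + permLength v :=
  permLength_mul_le' (permLength v) u v rfl

end LengthArith
section HeckeMult
set_option linter.unusedSectionVars false

open Equiv Finset

variable {R : Type} [CommRing R] {r : ℕ} {H : Type} [Ring H] [Algebra R H]
variable (q : R) (T : Equiv.Perm (Fin r) → H)
variable (hone : T 1 = 1)
  (hmul₁ : ∀ w s : Equiv.Perm (Fin r), IsSimpleTransposition s →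
      permLength (w * s) = permLength w + 1 → T w * T s = T (w * s))
  (hmul₂ : ∀ w s : Equiv.Perm (Fin r), IsSimpleTransposition s →
      permLength (w * s) + 1 = permLength w → T w * T s = q • T (w * s) + (q - 1) • T w)

include hone hmul₁

lemma T_mul_adds' : ∀ (n : ℕ) (w w' : Equiv.Perm (Fin r)), permLength w' = n →
    permLength (w * w') = permLength w + permLength w' → T w * T w' = T (w * w') := by
  intro n
  induction n using Nat.strong_induction_on with
  | _ n ih =>
    intro w w' hn hadd
    rcases eq_or_ne w' 1 with rfl | hv
    · rw [hone, mul_one, mul_one]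
    · obtain ⟨i, hi, hd⟩ := descent_exists w'⁻¹ (by simpa using hv)
      rcases len_sw_left_cases w' i hi with ⟨h1, _⟩ | ⟨_, hstep⟩
      · exact absurd hd (lt_asymm h1)
      set s := sw i hi with hsdef
      set u := s * w' with hudef
      have hw' : w' = s * u := by
        rw [hudef, ← mul_assoc, sw_mul_self, one_mul]
      have hlu : permLength u + 1 = permLength w' := hstep
      have hs1 : permLength s = 1 := permLength_sw i hi
      have hsu_adds : permLength (s * u) = permLength s + permLength u := by
        rw [← hw', hs1]; omega
      have hws_ub : permLength (w * s) ≤ permLength w + 1 := by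
        rcases len_sw_cases w i hi with ⟨_, h⟩ | ⟨_, h⟩ <;> rw [← hsdef] at h <;> omega
      have hassoc : w * w' = (w * s) * u := by
        rw [hw', ← mul_assoc]
      have hws_lb : permLength w + 1 ≤ permLength (w * s) := by
        have h1 : permLength ((w * s) * u) ≤ permLength (w * s) + permLength u :=
          permLength_mul_le _ _
        rw [← hassoc, hadd] at h1
        omega
      have hws : permLength (w * s) = permLength w + 1 := le_antisymm hws_ub hws_lb
      have hwsu_adds : permLength ((w * s) * u) = permLength (w * s) + permLength u := by
        rw [← hassoc, hadd]; omega
      have hulen : permLength u < n := by omega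
      have e1 : T s * T u = T (s * u) := ih _ hulen s u rfl hsu_adds
      have e2 : T (w * s) * T u = T ((w * s) * u) := ih _ hulen (w * s) u rfl hwsu_adds
      calc T w * T w' = T w * (T s * T u) := by rw [e1, ← hw']
        _ = (T w * T s) * T u := by rw [mul_assoc]
        _ = T (w * s) * T u := by rw [hmul₁ w s (sw_isSimple i hi) hws]
        _ = T (w * w') := by rw [e2, hassoc]

lemma T_mul_adds (w w' : Equiv.Perm (Fin r))
    (hadd : permLength (w * w') = permLength w + permLength w') :
    T w * T w' = T (w * w') :=
  T_mul_adds' T hone hmul₁ (permLength w') w w' rfl hadd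

lemma T_left₁ (i : ℕ) (hi : i + 1 < r) (u : Equiv.Perm (Fin r))
    (h : permLength (sw i hi * u) = permLength u + 1) :
    T (sw i hi) * T u = T (sw i hi * u) := by
  apply T_mul_adds T hone hmul₁
  rw [h, permLength_sw, add_comm]

include hmul₂

lemma T_sw_sq (i : ℕ) (hi : i + 1 < r) :
    T (sw i hi) * T (sw i hi) = q • (1 : H) + (q - 1) • T (sw i hi) := by
  have h := hmul₂ (sw i hi) (sw i hi) (sw_isSimple i hi)
    (by rw [sw_mul_self, permLength_one, permLength_sw])
  rw [sw_mul_self, hone] at h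
  exact h

lemma T_left₂ (i : ℕ) (hi : i + 1 < r) (u : Equiv.Perm (Fin r))
    (h : permLength (sw i hi * u) + 1 = permLength u) :
    T (sw i hi) * T u = q • T (sw i hi * u) + (q - 1) • T u := by
  set s := sw i hi with hsdef
  set v := s * u with hvdef
  have hu : u = s * v := by rw [hvdef, ← mul_assoc, sw_mul_self, one_mul]
  have hv : permLength (s * v) = permLength v + 1 := by rw [← hu]; omega
  have e1 : T s * T v = T u := by
    rw [T_left₁ T hone hmul₁ i hi v hv, ← hu]
  calc T s * T u = T s * (T s * T v) := by rw [e1]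
    _ = (T s * T s) * T v := by rw [mul_assoc]
    _ = (q • (1:H) + (q-1) • T s) * T v := by rw [T_sw_sq q T hone hmul₁ hmul₂ i hi]
    _ = q • T v + (q-1) • (T s * T v) := by
        rw [add_mul, smul_mul_assoc, smul_mul_assoc, one_mul]
    _ = q • T (s * u) + (q - 1) • T u := by rw [e1, hvdef]

end HeckeMult
section RowIndexAPI

open Equiv Finset

variable {r : ℕ} {f : ℕ → ℕ}

lemma partialSum_mono (f : ℕ → ℕ) : Monotone (partialSum f) := fun a b hab =>
  Finset.sum_le_sum_of_subset (Finset.range_subset_range.mpr hab)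

lemma partialSum_succ (f : ℕ → ℕ) (e : ℕ) :
    partialSum f (e+1) = partialSum f e + f e := Finset.sum_range_succ f e

lemma comp_bound (hf : IsCompositionOf f r) :
    ∃ N, (∀ m, N ≤ m → partialSum f m = r) ∧ ∀ k, N ≤ k → f k = 0 := by
  obtain ⟨hfin, hsum⟩ := hf
  obtain ⟨N, hN⟩ := hfin.toFinset.exists_nat_subset_range
  refine ⟨N, ?_, ?_⟩
  · intro m hm
    rw [← hsum, finsum_eq_sum _ hfin, partialSum]
    refine (Finset.sum_subset (hN.trans (Finset.range_subset_range.mpr hm)) ?_).symm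
    intro x _ hx
    by_contra hc
    exact hx (hfin.mem_toFinset.mpr hc)
  · intro k hk
    by_contra hc
    have h1 : k ∈ hfin.toFinset := hfin.mem_toFinset.mpr hc
    have := Finset.mem_range.mp (hN h1)
    omega

lemma partialSum_le_r (hf : IsCompositionOf f r) (m : ℕ) : partialSum f m ≤ r := by
  obtain ⟨N, hN, -⟩ := comp_bound hf
  calc partialSum f m ≤ partialSum f (max m N) := partialSum_mono f (le_max_left m N)
    _ = r := hN _ (le_max_right m N)

lemma rowIndex_spec (hf : IsCompositionOf f r) (b : Fin r) :
    partialSum f (rowIndex f b) ≤ (b:ℕ) ∧ (b:ℕ) < partialSum f (rowIndex f b + 1) := by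
  obtain ⟨N, hN, -⟩ := comp_bound hf
  have hne : {i : ℕ | (b : ℕ) < partialSum f (i + 1)}.Nonempty := by
    refine ⟨N, ?_⟩
    simp only [Set.mem_setOf_eq]
    rw [hN (N+1) (by omega)]
    exact b.isLt
  have hmem := Nat.sInf_mem hne
  refine ⟨?_, hmem⟩
  rcases Nat.eq_zero_or_pos (rowIndex f b) with h | h
  · rw [h]; exact Nat.zero_le _
  · have hnm : rowIndex f b - 1 ∉ {i : ℕ | (b : ℕ) < partialSum f (i + 1)} :=
      Nat.notMem_of_lt_sInf (by rw [rowIndex] at h ⊢; omega)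
    simp only [Set.mem_setOf_eq, not_lt] at hnm
    have : rowIndex f b - 1 + 1 = rowIndex f b := by omega
    rwa [this] at hnm

lemma rowIndex_eq_iff (hf : IsCompositionOf f r) (b : Fin r) (i : ℕ) :
    rowIndex f b = i ↔ partialSum f i ≤ (b:ℕ) ∧ (b:ℕ) < partialSum f (i+1) := by
  constructor
  · rintro rfl; exact rowIndex_spec hf b
  · rintro ⟨h1, h2⟩
    have hle : rowIndex f b ≤ i := Nat.sInf_le h2
    by_contra hc
    have hlt : rowIndex f b < i := by omega
    have := (rowIndex_spec hf b).2
    have h3 : partialSum f (rowIndex f b + 1) ≤ partialSum f i :=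
      partialSum_mono f (by omega)
    omega

lemma rowIndex_mono (hf : IsCompositionOf f r) {b b' : Fin r} (h : b ≤ b') :
    rowIndex f b ≤ rowIndex f b' := by
  apply Nat.sInf_le
  simp only [Set.mem_setOf_eq]
  have := (rowIndex_spec hf b').2
  have hbb : (b : ℕ) ≤ (b' : ℕ) := h
  omega

lemma rowIndex_lt_iff (hf : IsCompositionOf f r) (b : Fin r) (e : ℕ) :
    rowIndex f b < e ↔ (b:ℕ) < partialSum f e := by
  constructor
  · intro h
    have := (rowIndex_spec hf b).2
    have h2 : partialSum f (rowIndex f b + 1) ≤ partialSum f e := partialSum_mono f (by omega)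
    omega
  · intro h
    have he : e ≠ 0 := by
      intro hc; rw [hc] at h; simp [partialSum] at h
    have hmem : e - 1 ∈ {i : ℕ | (b : ℕ) < partialSum f (i + 1)} := by
      simp only [Set.mem_setOf_eq]
      have : e - 1 + 1 = e := by omega
      rwa [this]
    have := Nat.sInf_le hmem
    rw [rowIndex]
    omega

lemma rowIndex_sandwich (hf : IsCompositionOf f r) {a c b : Fin r}
    (hrow : rowIndex f a = rowIndex f b) (h1 : a ≤ c) (h2 : c ≤ b) :
    rowIndex f c = rowIndex f a := by
  have m1 := rowIndex_mono hf h1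
  have m2 := rowIndex_mono hf h2
  omega

end RowIndexAPI

section YoungAPI

open Equiv Finset

variable {r : ℕ} {f : ℕ → ℕ}

lemma young_mem_iff (w : Equiv.Perm (Fin r)) :
    w ∈ YoungSubgroup f ↔ ∀ b : Fin r, rowIndex f (w b) = rowIndex f b := Iff.rfl

lemma young_one : (1 : Equiv.Perm (Fin r)) ∈ YoungSubgroup f := fun b => rfl

lemma young_mul {u v : Equiv.Perm (Fin r)} (hu : u ∈ YoungSubgroup f)
    (hv : v ∈ YoungSubgroup f) : u * v ∈ YoungSubgroup f := by
  intro b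
  have := hu (v b)
  have := hv b
  simp only [Equiv.Perm.mul_apply]
  omega

lemma young_inv {u : Equiv.Perm (Fin r)} (hu : u ∈ YoungSubgroup f) :
    u⁻¹ ∈ YoungSubgroup f := by
  intro b
  have := hu (u⁻¹ b)
  rw [show u (u⁻¹ b) = b from u.apply_symm_apply b] at this
  omega

lemma young_swap_iff (a b : Fin r) :
    Equiv.swap a b ∈ YoungSubgroup f ↔ rowIndex f a = rowIndex f b := by
  constructor
  · intro h
    have := h a
    rw [Equiv.swap_apply_left] at this
    omega
  · intro h x
    rcases eq_or_ne x a with rfl | hxa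
    · rw [Equiv.swap_apply_left]; omega
    rcases eq_or_ne x b with rfl | hxb
    · rw [Equiv.swap_apply_right]; omega
    · rw [Equiv.swap_apply_of_ne_of_ne hxa hxb]

lemma young_sw_iff (i : ℕ) (hi : i + 1 < r) :
    (sw i hi : Equiv.Perm (Fin r)) ∈ YoungSubgroup f ↔
      rowIndex f (⟨i, Nat.lt_of_succ_lt hi⟩ : Fin r) = rowIndex f ⟨i+1, hi⟩ :=
  young_swap_iff _ _

end YoungAPI
section Ladd

open Equiv Finset

variable {r : ℕ} {g : ℕ → ℕ}

/-- a nontrivial element of a Young subgroup has an adjacent descent within a row -/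
lemma young_descent (hg : IsCompositionOf g r) {π : Equiv.Perm (Fin r)}
    (hπ : π ∈ YoungSubgroup g) (hne : π ≠ 1) :
    ∃ (i : ℕ) (hi : i + 1 < r),
      rowIndex g (⟨i, Nat.lt_of_succ_lt hi⟩ : Fin r) = rowIndex g ⟨i+1, hi⟩ ∧
        π ⟨i+1, hi⟩ < π ⟨i, Nat.lt_of_succ_lt hi⟩ := by
  obtain ⟨i, hi, hd⟩ := descent_exists π hne
  refine ⟨i, hi, ?_, hd⟩
  have m1 : rowIndex g (⟨i, Nat.lt_of_succ_lt hi⟩ : Fin r) ≤ rowIndex g ⟨i+1, hi⟩ :=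
    rowIndex_mono hg (by simp [Fin.le_def])
  have m2 : rowIndex g (π ⟨i+1, hi⟩) ≤ rowIndex g (π ⟨i, Nat.lt_of_succ_lt hi⟩) :=
    rowIndex_mono hg (le_of_lt hd)
  rw [hπ _, hπ _] at m2
  omega

/-- adjacent increasing within rows implies increasing within rows -/
lemma row_increasing_of_adjacent (hg : IsCompositionOf g r) (v : Fin r → Fin r)
    (hv : ∀ (i : ℕ) (hi : i + 1 < r),
      rowIndex g (⟨i, Nat.lt_of_succ_lt hi⟩ : Fin r) = rowIndex g ⟨i+1, hi⟩ →
        v ⟨i, Nat.lt_of_succ_lt hi⟩ < v ⟨i+1, hi⟩) :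
    ∀ a b : Fin r, rowIndex g a = rowIndex g b → a < b → v a < v b := by
  have key : ∀ (k : ℕ) (a b : Fin r), (b : ℕ) = (a : ℕ) + k →
      rowIndex g a = rowIndex g b → a < b → v a < v b := by
    intro k
    induction k with
    | zero => intro a b hab _ hlt; exfalso; rw [Fin.lt_def] at hlt; omega
    | succ n ih =>
      intro a b hab hrow hlt
      rcases Nat.eq_zero_or_pos n with rfl | hn
      · -- adjacent
        have hi : (a : ℕ) + 1 < r := by have := b.isLt; omega
        have ha : (⟨(a:ℕ), Nat.lt_of_succ_lt hi⟩ : Fin r) = a := by ext; rfl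
        have hb : (⟨(a:ℕ)+1, hi⟩ : Fin r) = b := by ext; simp; omega
        have := hv (a : ℕ) hi (by rw [ha, hb]; exact hrow)
        rwa [ha, hb] at this
      · -- chain through c = a + n
        have hcr : (a : ℕ) + n < r := by have := b.isLt; omega
        set c : Fin r := ⟨(a:ℕ) + n, hcr⟩ with hc
        have hac : a < c := by rw [Fin.lt_def]; simp [hc]; omega
        have hcb : c < b := by rw [Fin.lt_def]; simp [hc]; omega
        have hrowc : rowIndex g c = rowIndex g a :=
          rowIndex_sandwich hg hrow (le_of_lt hac) (le_of_lt hcb)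
        have h1 : v a < v c := ih a c (by simp [hc]) (by omega) hac
        have h2 : v c < v b := by
          have hi : (c : ℕ) + 1 < r := by have := b.isLt; simp [hc]; omega
          have hcc : (⟨(c:ℕ), Nat.lt_of_succ_lt hi⟩ : Fin r) = c := by ext; rfl
          have hbb : (⟨(c:ℕ)+1, hi⟩ : Fin r) = b := by ext; simp [hc]; omega
          have := hv (c : ℕ) hi (by rw [hcc, hbb]; omega)
          rwa [hcc, hbb] at this
        exact lt_trans h1 h2
  intro a b hrow hlt
  have : (b : ℕ) = (a : ℕ) + ((b:ℕ) - (a:ℕ)) := by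
    have : (a:ℕ) < (b:ℕ) := hlt
    omega
  exact key _ a b this hrow hlt

/-- length additivity for a row-increasing w against Young subgroup elements -/
lemma length_add_young (hg : IsCompositionOf g r) (w : Equiv.Perm (Fin r))
    (hw : ∀ a b : Fin r, rowIndex g a = rowIndex g b → a < b → w⁻¹ a < w⁻¹ b) :
    ∀ (n : ℕ) (π : Equiv.Perm (Fin r)), permLength π = n → π ∈ YoungSubgroup g →
      permLength (π * w) = permLength π + permLength w := by
  intro n
  induction n using Nat.strong_induction_on with
  | _ n ih =>
    intro π hn hπ
    rcases eq_or_ne π 1 with rfl | hne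
    · rw [one_mul, permLength_one, zero_add]
    · obtain ⟨i, hi, hrow, hd⟩ := young_descent hg (young_inv hπ) (by simpa using hne)
      set s : Equiv.Perm (Fin r) := sw i hi with hsdef
      have hsY : s ∈ YoungSubgroup g := (young_sw_iff i hi).mpr hrow
      -- hd : π⁻¹ ⟨i+1⟩ < π⁻¹ ⟨i⟩, a left descent of π
      have hstep : permLength (s * π) + 1 = permLength π := by
        rcases len_sw_left_cases π i hi with ⟨h1, _⟩ | ⟨_, h2⟩
        · exact absurd hd (lt_asymm h1)
        · exact h2
      set π'' : Equiv.Perm (Fin r) := s * π with hπ''def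
      have hππ : π = s * π'' := by
        rw [hπ''def, ← mul_assoc, sw_mul_self, one_mul]
      have hπ''Y : π'' ∈ YoungSubgroup g := young_mul hsY hπ
      have hπ''len : permLength π'' + 1 = permLength π := hstep
      -- direction : π''⁻¹ ⟨i⟩ < π''⁻¹ ⟨i+1⟩
      have hdir : π''⁻¹ ⟨i, Nat.lt_of_succ_lt hi⟩ < π''⁻¹ ⟨i+1, hi⟩ := by
        rcases len_sw_left_cases π'' i hi with ⟨h1, _⟩ | ⟨_, h2⟩
        · exact h1
        · exfalso
          have : s * π'' = π := hππ.symm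
          rw [this] at h2
          omega
      -- images are in the same row
      have hrows : rowIndex g (π''⁻¹ ⟨i, Nat.lt_of_succ_lt hi⟩) =
          rowIndex g (π''⁻¹ ⟨i+1, hi⟩) := by
        have e1 := young_inv hπ''Y ⟨i, Nat.lt_of_succ_lt hi⟩
        have e2 := young_inv hπ''Y ⟨i+1, hi⟩
        omega
      have hwdir := hw _ _ hrows hdir
      have hcase : permLength (s * (π'' * w)) = permLength (π'' * w) + 1 := by
        rcases len_sw_left_cases (π'' * w) i hi with ⟨_, h1⟩ | ⟨h2, _⟩
        · exact h1
        · exfalso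
          rw [mul_inv_rev] at h2
          simp only [Equiv.Perm.mul_apply] at h2
          exact absurd hwdir (lt_asymm h2)
      have hih : permLength (π'' * w) = permLength π'' + permLength w :=
        ih (permLength π'') (by omega) π'' rfl hπ''Y
      have : π * w = s * (π'' * w) := by rw [hππ, mul_assoc]
      rw [this, hcase, hih]
      omega

end Ladd
section HeckeYoung

set_option linter.unusedSectionVars false

open Equiv Finset

variable {R : Type} [CommRing R] {r : ℕ} {H : Type} [Ring H] [Algebra R H]
variable (q : R) (T : Equiv.Perm (Fin r) → H)
variable (hone : T 1 = 1)
  (hmul₁ : ∀ w s : Equiv.Perm (Fin r), IsSimpleTransposition s →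
      permLength (w * s) = permLength w + 1 → T w * T s = T (w * s))
  (hmul₂ : ∀ w s : Equiv.Perm (Fin r), IsSimpleTransposition s →
      permLength (w * s) + 1 = permLength w → T w * T s = q • T (w * s) + (q - 1) • T w)

/-- Finset version of a Young subgroup -/
def YS {r : ℕ} (f : ℕ → ℕ) : Finset (Equiv.Perm (Fin r)) :=
  (Set.toFinite (YoungSubgroup (r := r) f)).toFinset

lemma YS_mem {f : ℕ → ℕ} (w : Equiv.Perm (Fin r)) :
    w ∈ YS (r := r) f ↔ w ∈ YoungSubgroup (r := r) f := Set.Finite.mem_toFinset _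

include hone hmul₁ hmul₂

lemma xg_mul_Ts {g : ℕ → ℕ} (i : ℕ) (hi : i + 1 < r)
    (hs : (sw i hi : Equiv.Perm (Fin r)) ∈ YoungSubgroup g) :
    (∑ π ∈ YS (r := r) g, T π) * T (sw i hi) = q • ∑ π ∈ YS (r := r) g, T π := by
  set s : Equiv.Perm (Fin r) := sw i hi with hsdef
  have key : ∑ π ∈ YS (r := r) g, (T π * T s - q • T π) = 0 := by
    apply Finset.sum_involution (fun π _ => π * s)
    · intro π hπ
      have hps : (π * s) * s = π := by rw [mul_assoc, hsdef, sw_mul_self, mul_one]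
      rcases len_sw_cases π i hi with ⟨_, h1⟩ | ⟨_, h1⟩ <;> rw [← hsdef] at h1
      · -- ℓ(πs) = ℓ(π)+1
        have e1 : T π * T s = T (π * s) := hmul₁ π s (sw_isSimple i hi) h1
        have h2 : permLength ((π * s) * s) + 1 = permLength (π * s) := by rw [hps]; omega
        have e2 : T (π * s) * T s = q • T ((π * s) * s) + (q-1) • T (π * s) :=
          hmul₂ (π * s) s (sw_isSimple i hi) h2
        rw [hps] at e2
        rw [e1, e2]
        module
      · -- ℓ(πs)+1 = ℓ(π)
        have e1 : T π * T s = q • T (π * s) + (q-1) • T π :=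
          hmul₂ π s (sw_isSimple i hi) h1
        have h2 : permLength ((π * s) * s) = permLength (π * s) + 1 := by rw [hps]; omega
        have e2 : T (π * s) * T s = T ((π * s) * s) :=
          hmul₁ (π * s) s (sw_isSimple i hi) h2
        rw [hps] at e2
        rw [e1, e2]
        module
    · intro π hπ hne
      intro hc
      have : s = 1 := by
        have := congrArg (fun x => π⁻¹ * x) hc
        simpa [← mul_assoc] using this
      exact sw_ne_one i hi this
    · intro π hπ
      rw [YS_mem] at hπ ⊢
      exact young_mul hπ hs
    · intro π hπ
      rw [mul_assoc, hsdef, sw_mul_self, mul_one]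
  have h2 : ∑ π ∈ YS (r := r) g, (T π * T s - q • T π) =
      (∑ π ∈ YS (r := r) g, T π) * T s - q • ∑ π ∈ YS (r := r) g, T π := by
    rw [Finset.sum_sub_distrib, Finset.sum_mul, Finset.smul_sum]
  rw [h2] at key
  linear_combination (norm := module) key

lemma xg_mul_Tpi {g : ℕ → ℕ} (hg : IsCompositionOf g r) :
    ∀ (n : ℕ) (π : Equiv.Perm (Fin r)), permLength π = n → π ∈ YoungSubgroup g →
    (∑ u ∈ YS (r := r) g, T u) * T π = q ^ (permLength π) • ∑ u ∈ YS (r := r) g, T u := by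
  intro n
  induction n using Nat.strong_induction_on with
  | _ n ih =>
    intro π hn hπ
    rcases eq_or_ne π 1 with rfl | hne
    · rw [hone, mul_one, permLength_one, pow_zero, one_smul]
    · obtain ⟨i, hi, hrow, hd⟩ := young_descent hg hπ hne
      set s : Equiv.Perm (Fin r) := sw i hi with hsdef
      have hsY : s ∈ YoungSubgroup g := (young_sw_iff i hi).mpr hrow
      obtain ⟨π', hπ'def⟩ : ∃ p : Equiv.Perm (Fin r), p = π * s := ⟨_, rfl⟩
      have hstep : permLength π' + 1 = permLength π := by
        rcases len_sw_cases π i hi with ⟨h1, _⟩ | ⟨_, h2⟩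
        · exact absurd hd (lt_asymm h1)
        · rw [hπ'def, hsdef]; exact h2
      have hππ : π = π' * s := by rw [hπ'def, mul_assoc, hsdef, sw_mul_self, mul_one]
      have hπ'Y : π' ∈ YoungSubgroup g := by rw [hπ'def]; exact young_mul hπ hsY
      have hadd : permLength (π' * s) = permLength π' + 1 := by
        have he : π' * s = π := hππ.symm
        rw [he, ← hstep]
      have hmulTT : T π' * T s = T π := by
        have := hmul₁ π' s (sw_isSimple i hi) hadd
        rw [this, ← hππ]
      have hih := ih (permLength π') (by omega) π' rfl hπ'Y
      calc (∑ u ∈ YS (r := r) g, T u) * T π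
          = ((∑ u ∈ YS (r := r) g, T u) * T π') * T s := by rw [mul_assoc, hmulTT]
        _ = (q ^ permLength π' • ∑ u ∈ YS (r := r) g, T u) * T s := by rw [hih]
        _ = q ^ permLength π' • ((∑ u ∈ YS (r := r) g, T u) * T s) := by
            rw [smul_mul_assoc]
        _ = q ^ permLength π' • (q • ∑ u ∈ YS (r := r) g, T u) := by
            rw [xg_mul_Ts q T hone hmul₁ hmul₂ i hi hsY]
        _ = q ^ permLength π • ∑ u ∈ YS (r := r) g, T u := by
            rw [smul_smul, ← pow_succ, hstep]

end HeckeYoung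
section SignRep

set_option linter.unusedSectionVars false

open Equiv Finset

variable {R : Type} [CommRing R] {r : ℕ} {H : Type} [Ring H] [Algebra R H]
variable (q : R) (T : Equiv.Perm (Fin r) → H)
variable (hone : T 1 = 1)
  (hmul₁ : ∀ w s : Equiv.Perm (Fin r), IsSimpleTransposition s →
      permLength (w * s) = permLength w + 1 → T w * T s = T (w * s))
  (hmul₂ : ∀ w s : Equiv.Perm (Fin r), IsSimpleTransposition s →
      permLength (w * s) + 1 = permLength w → T w * T s = q • T (w * s) + (q - 1) • T w)

include hone hmul₁ hmul₂

lemma Ts_mul_Y (c : Rˣ) (hqc : q * ((c : Rˣ) : R) = -1) {f : ℕ → ℕ} (i : ℕ) (hi : i + 1 < r)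
    (hs : (sw i hi : Equiv.Perm (Fin r)) ∈ YoungSubgroup f) :
    T (sw i hi) * (∑ u ∈ YS (r := r) f, ((c ^ permLength u : Rˣ) : R) • T u) =
      - ∑ u ∈ YS (r := r) f, ((c ^ permLength u : Rˣ) : R) • T u := by
  have hq1 : ∀ n : ℕ, ((c ^ n : Rˣ) : R) + q * ((c ^ (n+1) : Rˣ) : R) = 0 := by
    intro n
    have h1 : ((c ^ (n+1) : Rˣ) : R) = ((c ^ n : Rˣ) : R) * ((c : Rˣ) : R) := by
      rw [pow_succ, Units.val_mul]
    rw [h1]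
    linear_combination ((c ^ n : Rˣ) : R) * hqc
  set s : Equiv.Perm (Fin r) := sw i hi with hsdef
  have hss : ∀ u : Equiv.Perm (Fin r), s * (s * u) = u := by
    intro u
    rw [← mul_assoc, hsdef, sw_mul_self, one_mul]
  -- the pair cancellation helper
  have hpair : ∀ u : Equiv.Perm (Fin r), permLength (s * u) = permLength u + 1 →
      (((c ^ permLength u : Rˣ) : R) • (T s * T u) + ((c ^ permLength u : Rˣ) : R) • T u) +
      (((c ^ permLength (s * u) : Rˣ) : R) • (T s * T (s * u)) +
        ((c ^ permLength (s * u) : Rˣ) : R) • T (s * u)) = 0 := by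
    intro u hlen
    have e1 : T s * T u = T (s * u) := by
      apply T_left₁ T hone hmul₁ i hi u
      rw [← hsdef, hlen]
    have e2 : T s * T (s * u) = q • T (s * (s * u)) + (q - 1) • T (s * u) := by
      apply T_left₂ q T hone hmul₁ hmul₂ i hi (s * u)
      rw [← hsdef, hss u, hlen]
    rw [e1, e2, hss u, hlen]
    have hcoef := hq1 (permLength u)
    set A := T u
    set B := T (s * u)
    set a := ((c ^ permLength u : Rˣ) : R)
    set b := ((c ^ (permLength u + 1) : Rˣ) : R)
    -- goal : a • B + a • A + (b • (q • A + (q-1) • B) + b • B) = 0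
    have expand : a • B + a • A + (b • (q • A + (q-1) • B) + b • B) =
        (a + q * b) • A + (a + q * b) • B := by module
    rw [expand, hcoef]
    simp
  have key : ∑ u ∈ YS (r := r) f,
      (((c ^ permLength u : Rˣ) : R) • (T s * T u) + ((c ^ permLength u : Rˣ) : R) • T u) = 0 := by
    apply Finset.sum_involution (fun u _ => s * u)
    · intro u hu
      rcases len_sw_left_cases u i hi with ⟨_, h1⟩ | ⟨_, h1⟩ <;> rw [← hsdef] at h1
      · exact hpair u h1
      · have h2 : permLength (s * (s * u)) = permLength (s * u) + 1 := by
          rw [hss u]; omega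
        have := hpair (s * u) h2
        rw [hss u] at this
        linear_combination (norm := module) this
    · intro u hu hne hc
      have : s = 1 := by
        have := congrArg (fun x => x * u⁻¹) hc
        simpa [mul_assoc] using this
      exact sw_ne_one i hi this
    · intro u hu
      rw [YS_mem] at hu ⊢
      exact young_mul hs hu
    · intro u hu
      exact hss u
  have expand2 : ∑ u ∈ YS (r := r) f,
      (((c ^ permLength u : Rˣ) : R) • (T s * T u) + ((c ^ permLength u : Rˣ) : R) • T u) =
      T s * (∑ u ∈ YS (r := r) f, ((c ^ permLength u : Rˣ) : R) • T u) +
        ∑ u ∈ YS (r := r) f, ((c ^ permLength u : Rˣ) : R) • T u := by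
    rw [Finset.sum_add_distrib, Finset.mul_sum]
    congr 1
    apply Finset.sum_congr rfl
    intro u _
    rw [mul_smul_comm]
  rw [expand2] at key
  linear_combination (norm := module) key
  
end SignRep
section Combinatorics

open Equiv Finset

variable {r : ℕ}

lemma card_filter_val_lt (m : ℕ) (hm : m ≤ r) :
    (Finset.univ.filter (fun b : Fin r => (b:ℕ) < m)).card = m := by
  have h : (Finset.univ.filter (fun b : Fin r => (b:ℕ) < m)).card = (Finset.range m).card := by
    apply Finset.card_nbij (fun b : Fin r => (b : ℕ))
    · intro b hb
      simp only [Finset.mem_coe, Finset.mem_filter] at hb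
      simp [hb.2]
    · intro b _ b' _ h
      exact Fin.ext h
    · intro x hx
      simp only [Finset.coe_range, Set.mem_Iio] at hx
      refine ⟨⟨x, by omega⟩, ?_, rfl⟩
      simp [hx]
  rw [h, Finset.card_range]

lemma double_count (l : ℕ → ℕ) (M e : ℕ) (hM : ∀ k, k < e → l k < M) :
    ∑ i ∈ Finset.range M, ((Finset.range e).filter (fun k => i + 1 ≤ l k)).card
      = partialSum l e := by
  have h1 : ∀ i, ((Finset.range e).filter (fun k => i + 1 ≤ l k)).card =
      ∑ k ∈ Finset.range e, if i + 1 ≤ l k then 1 else 0 := by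
    intro i; rw [Finset.card_filter]
  simp_rw [h1]
  rw [Finset.sum_comm]
  rw [partialSum]
  apply Finset.sum_congr rfl
  intro k hk
  rw [Finset.mem_range] at hk
  have h2 : ∑ i ∈ Finset.range M, (if i + 1 ≤ l k then 1 else 0) =
      ((Finset.range M).filter (fun i => i + 1 ≤ l k)).card := by
    rw [Finset.card_filter]
  rw [h2]
  have h3 : (Finset.range M).filter (fun i => i + 1 ≤ l k) = Finset.range (l k) := by
    ext i
    simp only [Finset.mem_filter, Finset.mem_range]
    constructor
    · rintro ⟨_, h⟩; omega
    · intro h; exact ⟨by have := hM k hk; omega, by omega⟩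
  rw [h3, Finset.card_range]

lemma conj_card (l : ℕ → ℕ) (N : ℕ) (hN : ∀ k, N ≤ k → l k = 0) (i : ℕ) :
    conjFn l i = ((Finset.range N).filter (fun k => i + 1 ≤ l k)).card := by
  rw [conjFn]
  have hset : {k : ℕ | i + 1 ≤ l k} = ↑((Finset.range N).filter (fun k => i + 1 ≤ l k)) := by
    ext k
    simp only [Set.mem_setOf_eq, Finset.coe_filter, Finset.mem_range]
    constructor
    · intro h
      refine ⟨?_, h⟩
      by_contra hc
      have := hN k (by omega)
      omega
    · rintro ⟨_, h⟩; exact h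
  rw [hset, Nat.card_eq_card_finite_toFinset (Set.toFinite _)]
  congr 1
  ext k
  simp

lemma l_le_r {l : ℕ → ℕ} (hl : IsCompositionOf l r) (k : ℕ) : l k ≤ r := by
  obtain ⟨N, hN1, hN2⟩ := comp_bound hl
  rcases lt_or_ge k N with h | h
  · have : l k ≤ partialSum l N := by
      rw [partialSum]
      exact Finset.single_le_sum (fun _ _ => Nat.zero_le _) (Finset.mem_range.mpr h)
    rw [hN1 N le_rfl] at this
    exact this
  · rw [hN2 k h]
    exact Nat.zero_le r

lemma conj_comp {l : ℕ → ℕ} (hl : IsCompositionOf l r) : IsCompositionOf (conjFn l) r := by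
  obtain ⟨N, hN1, hN2⟩ := comp_bound hl
  have hsupp : Function.support (conjFn l) ⊆ Set.Iio (r + 1) := by
    intro i hi
    simp only [Function.mem_support] at hi
    rw [conj_card l N hN2 i] at hi
    obtain ⟨k, hk⟩ := Finset.card_ne_zero.mp hi
    simp only [Finset.mem_filter, Finset.mem_range] at hk
    have := l_le_r hl k
    simp only [Set.mem_Iio]
    omega
  constructor
  · exact Set.Finite.subset (Set.finite_Iio _) hsupp
  · have heq : ∑ᶠ i, conjFn l i = ∑ i ∈ Finset.range (r + 1), conjFn l i := by
      apply finsum_eq_sum_of_support_subset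
      intro i hi
      simp only [Finset.coe_range, Set.mem_Iio]
      exact hsupp hi
    rw [heq]
    have : ∀ i ∈ Finset.range (r+1), conjFn l i =
        ((Finset.range N).filter (fun k => i + 1 ≤ l k)).card :=
      fun i _ => conj_card l N hN2 i
    rw [Finset.sum_congr rfl this, double_count l (r+1) N
      (fun k _ => by have := l_le_r hl k; omega), hN1 N le_rfl]

lemma conj_initial {l : ℕ → ℕ} (hl : IsCompositionOf l r) (hlp : Antitone l) (i k : ℕ) :
    i + 1 ≤ l k ↔ k < conjFn l i := by
  obtain ⟨N, hN1, hN2⟩ := comp_bound hl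
  rw [conj_card l N hN2 i]
  set S := (Finset.range N).filter (fun k => i + 1 ≤ l k) with hS
  have hdc : ∀ k k' : ℕ, k' ≤ k → k ∈ S → k' ∈ S := by
    intro k k' hkk hk
    simp only [hS, Finset.mem_filter, Finset.mem_range] at hk ⊢
    exact ⟨by omega, le_trans hk.2 (hlp hkk)⟩
  have hSrange : S = Finset.range S.card := by
    ext k
    simp only [Finset.mem_range]
    constructor
    · intro hk
      have hsub : Finset.range (k+1) ⊆ S := by
        intro k' hk'
        simp only [Finset.mem_range] at hk'
        exact hdc k k' (by omega) hk
      have := Finset.card_le_card hsub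
      rw [Finset.card_range] at this
      omega
    · intro hk
      by_contra hc
      have hsub : S ⊆ Finset.range k := by
        intro k' hk'
        simp only [Finset.mem_range]
        by_contra hc'
        exact hc (hdc k' k (by omega) hk')
      have := Finset.card_le_card hsub
      rw [Finset.card_range] at this
      omega
  constructor
  · intro h
    have hk : k ∈ S := by
      simp only [hS, Finset.mem_filter, Finset.mem_range]
      refine ⟨?_, h⟩
      by_contra hc
      have := hN2 k (by omega)
      omega
    rw [hSrange] at hk
    exact Finset.mem_range.mp hk
  · intro h
    have hk : k ∈ S := by rw [hSrange]; exact Finset.mem_range.mpr h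
    simp only [hS, Finset.mem_filter] at hk
    exact hk.2

lemma min_conj {l : ℕ → ℕ} (hl : IsCompositionOf l r) (hlp : Antitone l) (i e : ℕ) :
    min (conjFn l i) e = ((Finset.range e).filter (fun k => i + 1 ≤ l k)).card := by
  have h : (Finset.range e).filter (fun k => i + 1 ≤ l k) =
      Finset.range (min (conjFn l i) e) := by
    ext k
    simp only [Finset.mem_filter, Finset.mem_range, conj_initial hl hlp i k]
    omega
  rw [h, Finset.card_range]

/-- counting boxes with position < e in each row of the conjugate diagram -/
lemma card_pos_lt {l : ℕ → ℕ} (hl : IsCompositionOf l r) (hlp : Antitone l) (e : ℕ) :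
    (Finset.univ.filter (fun b : Fin r =>
      (b:ℕ) - partialSum (conjFn l) (rowIndex (conjFn l) b) < e)).card = partialSum l e := by
  have hl' : IsCompositionOf (conjFn l) r := conj_comp hl
  obtain ⟨N', hN'1, hN'2⟩ := comp_bound hl'
  set M : ℕ := N' + r + 1 with hM
  set C := Finset.univ.filter (fun b : Fin r =>
      (b:ℕ) - partialSum (conjFn l) (rowIndex (conjFn l) b) < e) with hC
  have hrowlt : ∀ b : Fin r, rowIndex (conjFn l) b < M := by
    intro b
    rw [rowIndex_lt_iff hl' b M, hN'1 M (by omega)]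
    exact b.isLt
  have hfib := Finset.card_eq_sum_card_fiberwise
    (f := fun b : Fin r => rowIndex (conjFn l) b) (s := C) (t := Finset.range M)
    (fun b _ => Finset.mem_range.mpr (hrowlt b))
  rw [hfib]
  have hstep : ∀ i ∈ Finset.range M, (C.filter (fun b => rowIndex (conjFn l) b = i)).card =
      min (conjFn l i) e := by
    intro i _
    have hmem : ∀ b : Fin r, (b ∈ C.filter (fun b => rowIndex (conjFn l) b = i)) ↔
        (partialSum (conjFn l) i ≤ (b:ℕ) ∧
          (b:ℕ) < partialSum (conjFn l) i + min (conjFn l i) e) := by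
      intro b
      rw [Finset.mem_filter, hC, Finset.mem_filter]
      constructor
      · rintro ⟨⟨-, hpos⟩, hrow⟩
        have hspec := (rowIndex_eq_iff hl' b i).mp hrow
        rw [partialSum_succ] at hspec
        rw [hrow] at hpos
        omega
      · rintro ⟨h1, h2⟩
        have hblt : (b:ℕ) < partialSum (conjFn l) (i+1) := by rw [partialSum_succ]; omega
        have hrow : rowIndex (conjFn l) b = i := (rowIndex_eq_iff hl' b i).mpr ⟨h1, hblt⟩
        exact ⟨⟨Finset.mem_univ b, by rw [hrow]; omega⟩, hrow⟩
    have hcr : (Finset.range (min (conjFn l i) e)).card = min (conjFn l i) e :=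
      Finset.card_range _
    rw [← hcr]
    apply Finset.card_nbij (fun b : Fin r => (b:ℕ) - partialSum (conjFn l) i)
    · intro b hb
      have h1 := (hmem b).mp hb
      simp only [Finset.mem_coe, Finset.mem_range]
      omega
    · intro b hb b' hb' hbb
      rw [Finset.mem_coe] at hb hb'
      have h1 := (hmem b).mp hb
      have h2 := (hmem b').mp hb'
      have hbb' : (b:ℕ) - partialSum (conjFn l) i = (b':ℕ) - partialSum (conjFn l) i := hbb
      exact Fin.ext (by omega)
    · intro x hx
      simp only [Finset.coe_range, Set.mem_Iio] at hx
      have hxr : partialSum (conjFn l) i + x < r := by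
        have h1 : partialSum (conjFn l) i + x < partialSum (conjFn l) (i+1) := by
          rw [partialSum_succ]; omega
        have h2 := partialSum_le_r hl' (i+1)
        omega
      have hval : ((⟨partialSum (conjFn l) i + x, hxr⟩ : Fin r) : ℕ) =
        partialSum (conjFn l) i + x := rfl
      refine ⟨⟨partialSum (conjFn l) i + x, hxr⟩, ?_, ?_⟩
      · rw [Finset.mem_coe, hmem, hval]
        omega
      · show ((⟨partialSum (conjFn l) i + x, hxr⟩ : Fin r) : ℕ) - partialSum (conjFn l) i = x
        rw [hval]; omega
  rw [Finset.sum_congr rfl hstep]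
  have : ∀ i ∈ Finset.range M, min (conjFn l i) e =
      ((Finset.range e).filter (fun k => i + 1 ≤ l k)).card :=
    fun i _ => min_conj hl hlp i e
  rw [Finset.sum_congr rfl this]
  exact double_count l M e (fun k _ => by have := l_le_r hl k; omega)

lemma dom_eq {l g : ℕ → ℕ} (h : ∀ e, partialSum l e = partialSum g e) : l = g := by
  funext e
  have h1 := h e
  have h2 := h (e+1)
  rw [partialSum_succ, partialSum_succ] at h2
  omega

/-- The key combinatorial lemma -/
lemma key_lemma {l g : ℕ → ℕ} (hl : IsCompositionOf l r) (hlp : Antitone l)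
    (hg : IsCompositionOf g r) (hdom : DomLE l g) (hne : l ≠ g)
    (w : Equiv.Perm (Fin r))
    (hwinc : ∀ a b : Fin r, rowIndex (conjFn l) a = rowIndex (conjFn l) b → a < b → w a < w b) :
    ∃ (j : ℕ) (hj : j + 1 < r),
      rowIndex (conjFn l) (⟨j, Nat.lt_of_succ_lt hj⟩ : Fin r) = rowIndex (conjFn l) ⟨j+1, hj⟩ ∧
      rowIndex g (w ⟨j, Nat.lt_of_succ_lt hj⟩) = rowIndex g (w ⟨j+1, hj⟩) := by
  have hl' : IsCompositionOf (conjFn l) r := conj_comp hl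
  by_contra hcon
  push_neg at hcon
  -- step 1 : strictly increasing g-rows along each conjugate row
  have hstep1 : ∀ (j : ℕ) (hj : j + 1 < r),
      rowIndex (conjFn l) (⟨j, Nat.lt_of_succ_lt hj⟩ : Fin r) = rowIndex (conjFn l) ⟨j+1, hj⟩ →
      rowIndex g (w ⟨j, Nat.lt_of_succ_lt hj⟩) < rowIndex g (w ⟨j+1, hj⟩) := by
    intro j hj hrow
    have hlt : w ⟨j, Nat.lt_of_succ_lt hj⟩ < w ⟨j+1, hj⟩ :=
      hwinc _ _ hrow (by simp [Fin.lt_def])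
    have hle : rowIndex g (w ⟨j, Nat.lt_of_succ_lt hj⟩) ≤ rowIndex g (w ⟨j+1, hj⟩) :=
      rowIndex_mono hg (le_of_lt hlt)
    have hne' := hcon j hj hrow
    omega
  -- step 2 : position in conjugate row bounds the g-row of the image
  have hstep2 : ∀ (m : ℕ) (b : Fin r),
      (b:ℕ) - partialSum (conjFn l) (rowIndex (conjFn l) b) = m → m ≤ rowIndex g (w b) := by
    intro m
    induction m with
    | zero => intro b _; exact Nat.zero_le _
    | succ n ih =>
      intro b hb
      have hspec := rowIndex_spec hl' b
      have hb1 : partialSum (conjFn l) (rowIndex (conjFn l) b) + (n + 1) ≤ (b:ℕ) := by omega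
      have hj : ((b:ℕ) - 1) + 1 < r := by have := b.isLt; omega
      have hb'val : ((⟨(b:ℕ) - 1, Nat.lt_of_succ_lt hj⟩ : Fin r) : ℕ) = (b:ℕ) - 1 := rfl
      have hrowb' : rowIndex (conjFn l) (⟨(b:ℕ) - 1, Nat.lt_of_succ_lt hj⟩ : Fin r) =
          rowIndex (conjFn l) b := by
        rw [rowIndex_eq_iff hl', hb'val]
        exact ⟨by omega, by omega⟩
      have hposb' : ((⟨(b:ℕ) - 1, Nat.lt_of_succ_lt hj⟩ : Fin r) : ℕ) -
          partialSum (conjFn l) (rowIndex (conjFn l)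
            (⟨(b:ℕ) - 1, Nat.lt_of_succ_lt hj⟩ : Fin r)) = n := by
        rw [hrowb', hb'val]
        omega
      have hih := ih _ hposb'
      have hbeq : (⟨(b:ℕ) - 1 + 1, hj⟩ : Fin r) = b := by ext; simp; omega
      have h1 := hstep1 ((b:ℕ) - 1) hj (by rw [hbeq]; exact hrowb')
      rw [hbeq] at h1
      omega
  -- step 3 : counting
  have hcount : ∀ e : ℕ, partialSum g e ≤ partialSum l e := by
    intro e
    have hA : (Finset.univ.filter (fun b : Fin r => rowIndex g (w b) < e)).card =
        partialSum g e := by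
      have h1 : (Finset.univ.filter (fun b : Fin r => rowIndex g (w b) < e)).card =
          (Finset.univ.filter (fun x : Fin r => (x:ℕ) < partialSum g e)).card := by
        apply Finset.card_nbij (fun b => w b)
        · intro b hb
          simp only [Finset.mem_coe, Finset.mem_filter, Finset.mem_univ, true_and] at hb ⊢
          rwa [← rowIndex_lt_iff hg]
        · intro b _ b' _ h
          exact w.injective h
        · intro x hx
          rw [Finset.mem_coe, Finset.mem_filter] at hx
          refine ⟨w⁻¹ x, ?_, w.apply_symm_apply x⟩
          rw [Finset.mem_coe, Finset.mem_filter]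
          exact ⟨Finset.mem_univ _,
            by rw [Equiv.Perm.inv_def, Equiv.apply_symm_apply, rowIndex_lt_iff hg]; exact hx.2⟩
        
      rw [h1, card_filter_val_lt _ (partialSum_le_r hg e)]
    have hsub : (Finset.univ.filter (fun b : Fin r => rowIndex g (w b) < e)) ⊆
        (Finset.univ.filter (fun b : Fin r =>
          (b:ℕ) - partialSum (conjFn l) (rowIndex (conjFn l) b) < e)) := by
      intro b hb
      simp only [Finset.mem_filter, Finset.mem_univ, true_and] at hb ⊢
      have := hstep2 ((b:ℕ) - partialSum (conjFn l) (rowIndex (conjFn l) b)) b rfl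
      omega
    have hcard := Finset.card_le_card hsub
    rw [hA, card_pos_lt hl hlp e] at hcard
    exact hcard
  apply hne
  apply dom_eq
  intro e
  exact le_antisymm (hdom e) (hcount e)

end Combinatorics
section Master

set_option linter.unusedSectionVars false

open Equiv Finset

variable {R : Type} [CommRing R] {r : ℕ} {H : Type} [Ring H] [Algebra R H]
variable (q : R) (T : Equiv.Perm (Fin r) → H)
variable (hone : T 1 = 1)
  (hmul₁ : ∀ w s : Equiv.Perm (Fin r), IsSimpleTransposition s →
      permLength (w * s) = permLength w + 1 → T w * T s = T (w * s))
  (hmul₂ : ∀ w s : Equiv.Perm (Fin r), IsSimpleTransposition s →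
      permLength (w * s) + 1 = permLength w → T w * T s = q • T (w * s) + (q - 1) • T w)

include hone hmul₁ hmul₂

lemma master_lemma {l g : ℕ → ℕ} (hl : IsCompositionOf l r) (hlp : Antitone l)
    (hg : IsCompositionOf g r) (hdom : DomLE l g) (hne : l ≠ g)
    (c : Rˣ) (hqc : q * ((c : Rˣ) : R) = -1) :
    ∀ (n : ℕ) (w : Equiv.Perm (Fin r)), permLength w = n →
      (∑ π ∈ YS (r := r) g, T π) * T w *
        (∑ u ∈ YS (r := r) (conjFn l), ((c ^ permLength u : Rˣ) : R) • T u) = 0 := by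
  have hl' : IsCompositionOf (conjFn l) r := conj_comp hl
  intro n
  induction n using Nat.strong_induction_on with
  | _ n ih =>
    intro w hn
    by_cases hA : ∃ (j : ℕ) (hj : j + 1 < r),
        rowIndex (conjFn l) (⟨j, Nat.lt_of_succ_lt hj⟩ : Fin r) = rowIndex (conjFn l) ⟨j+1, hj⟩ ∧
        w ⟨j+1, hj⟩ < w ⟨j, Nat.lt_of_succ_lt hj⟩
    · -- case (a) : right descent in W_{l'}
      obtain ⟨j, hj, hrow, hd⟩ := hA
      have hsY : (sw j hj : Equiv.Perm (Fin r)) ∈ YoungSubgroup (conjFn l) :=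
        (young_sw_iff j hj).mpr hrow
      rcases len_sw_cases w j hj with ⟨h1, _⟩ | ⟨_, hstep⟩
      · exact absurd hd (lt_asymm h1)
      obtain ⟨w', hw'⟩ : ∃ p : Equiv.Perm (Fin r), p = w * sw j hj := ⟨_, rfl⟩
      have hws : w = w' * sw j hj := by
        rw [hw', mul_assoc, sw_mul_self, mul_one]
      have hlen : permLength w' + 1 = permLength w := by rw [hw']; exact hstep
      have hTw : T w = T w' * T (sw j hj) := by
        rw [hws]
        exact (hmul₁ w' (sw j hj) (sw_isSimple j hj) (by rw [← hws]; omega)).symm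
      rw [hTw, ← mul_assoc, mul_assoc _ (T (sw j hj)) _,
        Ts_mul_Y q T hone hmul₁ hmul₂ c hqc j hj hsY, mul_neg,
        ih (permLength w') (by omega) w' rfl, neg_zero]
    by_cases hB : ∃ (i : ℕ) (hi : i + 1 < r),
        rowIndex g (⟨i, Nat.lt_of_succ_lt hi⟩ : Fin r) = rowIndex g ⟨i+1, hi⟩ ∧
        w⁻¹ ⟨i+1, hi⟩ < w⁻¹ ⟨i, Nat.lt_of_succ_lt hi⟩
    · -- case (b) : left descent in W_g
      obtain ⟨i, hi, hrow, hd⟩ := hB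
      have hsY : (sw i hi : Equiv.Perm (Fin r)) ∈ YoungSubgroup g :=
        (young_sw_iff i hi).mpr hrow
      rcases len_sw_left_cases w i hi with ⟨h1, _⟩ | ⟨_, hstep⟩
      · exact absurd hd (lt_asymm h1)
      obtain ⟨w'', hw''⟩ : ∃ p : Equiv.Perm (Fin r), p = sw i hi * w := ⟨_, rfl⟩
      have hws : w = sw i hi * w'' := by
        rw [hw'', ← mul_assoc, sw_mul_self, one_mul]
      have hlen : permLength w'' + 1 = permLength w := by rw [hw'']; exact hstep
      have hTw : T w = T (sw i hi) * T w'' := by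
        rw [hws]
        exact (T_left₁ T hone hmul₁ i hi w'' (by rw [← hws]; omega)).symm
      rw [hTw, ← mul_assoc, xg_mul_Ts q T hone hmul₁ hmul₂ i hi hsY, smul_mul_assoc,
        smul_mul_assoc, ih (permLength w'') (by omega) w'' rfl, smul_zero]
    · -- case (c) : w is a distinguished representative; use the key lemma
      push_neg at hA hB
      have hwinc : ∀ a b : Fin r, rowIndex (conjFn l) a = rowIndex (conjFn l) b →
          a < b → w a < w b := by
        apply row_increasing_of_adjacent hl' w
        intro j hj hrow
        have h1 := hA j hj hrow
        have h2 : w ⟨j, Nat.lt_of_succ_lt hj⟩ ≠ w ⟨j+1, hj⟩ := by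
          intro hc
          have := w.injective hc
          simp [Fin.ext_iff] at this
        exact lt_of_le_of_ne h1 h2
      have hwinv : ∀ a b : Fin r, rowIndex g a = rowIndex g b → a < b → w⁻¹ a < w⁻¹ b := by
        apply row_increasing_of_adjacent hg (fun x => w⁻¹ x)
        intro i hi hrow
        have h1 := hB i hi hrow
        have h2 : w⁻¹ ⟨i, Nat.lt_of_succ_lt hi⟩ ≠ w⁻¹ ⟨i+1, hi⟩ := by
          intro hc
          have := w⁻¹.injective hc
          simp [Fin.ext_iff] at this
        exact lt_of_le_of_ne h1 h2
      obtain ⟨j, hj, hrowl, hrowg⟩ := key_lemma hl hlp hg hdom hne w hwinc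
      -- s in W_{l'} , t in W_g, t * w = w * s
      have hsY : (sw j hj : Equiv.Perm (Fin r)) ∈ YoungSubgroup (conjFn l) :=
        (young_sw_iff j hj).mpr hrowl
      set a : Fin r := ⟨j, Nat.lt_of_succ_lt hj⟩ with hadef
      set b : Fin r := ⟨j+1, hj⟩ with hbdef
      obtain ⟨t, htdef⟩ : ∃ p : Equiv.Perm (Fin r), p = Equiv.swap (w a) (w b) := ⟨_, rfl⟩
      have htY : t ∈ YoungSubgroup g := by
        rw [htdef]
        exact (young_swap_iff (w a) (w b)).mpr hrowg
      have htw : t * w = w * sw j hj := by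
        rw [htdef, sw, ← hadef, ← hbdef, Equiv.swap_apply_apply, mul_assoc, mul_assoc]
        simp
      have htt : t * t = 1 := by
        rw [htdef]
        exact Equiv.swap_mul_self _ _
      have htne : t ≠ 1 := by
        rw [htdef]
        intro hc
        rw [Equiv.swap_eq_one_iff] at hc
        have := w.injective hc
        simp [hadef, hbdef, Fin.ext_iff] at this
      -- X * T w = sum over the coset
      have hladd : ∀ π ∈ YoungSubgroup (r := r) g,
          permLength (π * w) = permLength π + permLength w := by
        intro π hπ
        exact length_add_young hg w hwinv (permLength π) π rfl hπ
      have hXw : (∑ π ∈ YS (r := r) g, T π) * T w = ∑ π ∈ YS (r := r) g, T (π * w) := by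
        rw [Finset.sum_mul]
        apply Finset.sum_congr rfl
        intro π hπ
        exact T_mul_adds T hone hmul₁ π w (hladd π ((YS_mem π).mp hπ))
      rw [hXw, Finset.sum_mul]
      -- pair cancellation via π ↦ π * t
      apply Finset.sum_involution (fun π _ => π * t)
      · intro π hπ
        have hπtw : (π * t) * w = (π * w) * sw j hj := by
          rw [mul_assoc, htw, ← mul_assoc]
        rw [hπtw]
        obtain ⟨x, hx⟩ : ∃ p : Equiv.Perm (Fin r), p = π * w := ⟨_, rfl⟩
        rw [← hx]
        rcases len_sw_cases x j hj with ⟨_, h1⟩ | ⟨_, h1⟩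
        · have e1 : T (x * sw j hj) = T x * T (sw j hj) :=
            (hmul₁ x (sw j hj) (sw_isSimple j hj) h1).symm
          rw [e1, mul_assoc, Ts_mul_Y q T hone hmul₁ hmul₂ c hqc j hj hsY, mul_neg]
          abel
        · have hxx : (x * sw j hj) * sw j hj = x := by
            rw [mul_assoc, sw_mul_self, mul_one]
          have e1 : T x = T (x * sw j hj) * T (sw j hj) := by
            have := hmul₁ (x * sw j hj) (sw j hj) (sw_isSimple j hj) (by rw [hxx]; omega)
            rw [hxx] at this
            exact this.symm
          rw [e1, mul_assoc, Ts_mul_Y q T hone hmul₁ hmul₂ c hqc j hj hsY, mul_neg]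
          abel
      · intro π hπ hne' hc
        have : t = 1 := by
          have := congrArg (fun x => π⁻¹ * x) hc
          simpa [← mul_assoc] using this
        exact htne this
      · intro π hπ
        rw [YS_mem] at hπ ⊢
        exact young_mul hπ htY
      · intro π hπ
        rw [mul_assoc, htt, mul_one]

end Master
section Assembly

set_option linter.unusedSectionVars false

open Equiv Finset

variable {R : Type} [CommRing R] {r : ℕ} {H : Type} [Ring H] [Algebra R H]
variable (q : R) (T : Equiv.Perm (Fin r) → H)
variable (hone : T 1 = 1)
  (hmul₁ : ∀ w s : Equiv.Perm (Fin r), IsSimpleTransposition s →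
      permLength (w * s) = permLength w + 1 → T w * T s = T (w * s))
  (hmul₂ : ∀ w s : Equiv.Perm (Fin r), IsSimpleTransposition s →
      permLength (w * s) + 1 = permLength w → T w * T s = q • T (w * s) + (q - 1) • T w)

include hone hmul₁ hmul₂

lemma master_general (hspan : Submodule.span R (Set.range T) = ⊤)
    {l g : ℕ → ℕ} (hl : IsCompositionOf l r) (hlp : Antitone l)
    (hg : IsCompositionOf g r) (hdom : DomLE l g) (hne : l ≠ g)
    (c : Rˣ) (hqc : q * ((c : Rˣ) : R) = -1) (m : H) :
    (∑ π ∈ YS (r := r) g, T π) * m *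
      (∑ u ∈ YS (r := r) (conjFn l), ((c ^ permLength u : Rˣ) : R) • T u) = 0 := by
  have hm : m ∈ Submodule.span R (Set.range T) := by rw [hspan]; trivial
  induction hm using Submodule.span_induction with
  | mem x hx =>
    obtain ⟨w, rfl⟩ := hx
    exact master_lemma q T hone hmul₁ hmul₂ hl hlp hg hdom hne c hqc (permLength w) w rfl
  | zero => rw [mul_zero, zero_mul]
  | add x y hx hy ihx ihy => rw [mul_add, add_mul, ihx, ihy, add_zero]
  | smul a x hx ihx => rw [mul_smul_comm, smul_mul_assoc, ihx, smul_zero]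

lemma claimC {g : ℕ → ℕ} (hg : IsCompositionOf g r) (Y : H)
    (hY : ∀ m : H, (∑ π ∈ YS (r := r) g, T π) * m * Y = 0) :
    ∀ (N : ℕ) (S : Finset (Equiv.Perm (Fin r))), S.card = N →
      (∀ π ∈ YoungSubgroup (r := r) g, ∀ u ∈ S, π * u ∈ S) → ∀ h : H,
      (∑ u ∈ S, T u) * (h * Y) = 0 := by
  intro N
  induction N using Nat.strong_induction_on with
  | _ N ihN =>
    intro S hcard hclosed h
    rcases Finset.eq_empty_or_nonempty S with rfl | hSne
    · rw [Finset.sum_empty, zero_mul]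
    obtain ⟨u₀, hu₀S, hu₀min⟩ := Finset.exists_min_image S permLength hSne
    -- u₀⁻¹ is increasing on the rows of g
    have hminrow : ∀ (i : ℕ) (hi : i + 1 < r),
        rowIndex g (⟨i, Nat.lt_of_succ_lt hi⟩ : Fin r) = rowIndex g ⟨i+1, hi⟩ →
        u₀⁻¹ ⟨i, Nat.lt_of_succ_lt hi⟩ < u₀⁻¹ ⟨i+1, hi⟩ := by
      intro i hi hrow
      have hsY : (sw i hi : Equiv.Perm (Fin r)) ∈ YoungSubgroup g :=
        (young_sw_iff i hi).mpr hrow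
      have hmem : sw i hi * u₀ ∈ S := hclosed _ hsY u₀ hu₀S
      have hge := hu₀min _ hmem
      rcases len_sw_left_cases u₀ i hi with ⟨h1, _⟩ | ⟨_, h2⟩
      · exact h1
      · omega
    have hwinv : ∀ a b : Fin r, rowIndex g a = rowIndex g b → a < b → u₀⁻¹ a < u₀⁻¹ b :=
      row_increasing_of_adjacent hg (fun x => u₀⁻¹ x) hminrow
    -- the coset of u₀
    set Sc : Finset (Equiv.Perm (Fin r)) := (YS (r := r) g).image (fun π => π * u₀) with hSc
    have hsub : Sc ⊆ S := by
      intro x hx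
      rw [hSc, Finset.mem_image] at hx
      obtain ⟨π, hπ, rfl⟩ := hx
      exact hclosed π ((YS_mem π).mp hπ) u₀ hu₀S
    have hsumSc : ∑ x ∈ Sc, T x = (∑ π ∈ YS (r := r) g, T π) * T u₀ := by
      rw [hSc, Finset.sum_image (by intro π _ π' _ hpp; exact mul_right_cancel hpp),
        Finset.sum_mul]
      apply Finset.sum_congr rfl
      intro π hπ
      exact (T_mul_adds T hone hmul₁ π u₀
        (length_add_young hg u₀ hwinv (permLength π) π rfl ((YS_mem π).mp hπ))).symm
    have hSczero : (∑ x ∈ Sc, T x) * (h * Y) = 0 := by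
      rw [hsumSc, mul_assoc, ← mul_assoc (T u₀) h Y, ← mul_assoc]
      exact hY (T u₀ * h)
    -- the remainder
    have hu₀Sc : u₀ ∈ Sc := by
      rw [hSc, Finset.mem_image]
      exact ⟨1, by rw [YS_mem]; exact young_one, by rw [one_mul]⟩
    have hcard' : (S \ Sc).card < N := by
      have h1 : (S \ Sc).card = S.card - Sc.card := Finset.card_sdiff_of_subset hsub
      have h2 : 0 < Sc.card := Finset.card_pos.mpr ⟨u₀, hu₀Sc⟩
      have h3 := Finset.card_le_card hsub
      omega
    have hclosed' : ∀ π ∈ YoungSubgroup (r := r) g, ∀ u ∈ S \ Sc, π * u ∈ S \ Sc := by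
      intro π hπ u hu
      rw [Finset.mem_sdiff] at hu ⊢
      refine ⟨hclosed π hπ u hu.1, ?_⟩
      intro hc
      apply hu.2
      rw [hSc, Finset.mem_image] at hc ⊢
      obtain ⟨π', hπ', hpp⟩ := hc
      refine ⟨π⁻¹ * π', ?_, ?_⟩
      · rw [YS_mem] at hπ' ⊢
        exact young_mul (young_inv hπ) hπ'
      · show (π⁻¹ * π') * u₀ = u
        rw [mul_assoc, hpp, ← mul_assoc, inv_mul_cancel, one_mul]
    have hrem := ihN (S \ Sc).card hcard' (S \ Sc) rfl hclosed' h
    have hsplit : ∑ u ∈ S, T u = ∑ u ∈ S \ Sc, T u + ∑ u ∈ Sc, T u :=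
      (Finset.sum_sdiff hsub).symm
    rw [hsplit, add_mul, hrem, hSczero, add_zero]

end Assembly
lemma finsum_mem_set_eq {α M : Type*} [Finite α] [AddCommMonoid M] (S : Set α) (f : α → M) :
    ∑ᶠ i ∈ S, f i = ∑ i ∈ (Set.toFinite S).toFinset, f i := by
  conv_lhs => rw [← Set.Finite.coe_toFinset (Set.toFinite S)]
  rw [finsum_mem_coe_finset]

theorem statement15 {R : Type} [CommRing R] [IsDomain R] (q : R) (hq : IsUnit q)
    {r : ℕ} {H : Type} [Ring H] [Algebra R H]
    (T : Equiv.Perm (Fin r) → H)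
    (hbasis : LinearIndependent R T)
    (hspan : Submodule.span R (Set.range T) = ⊤)
    (hone : T 1 = 1)
    (hmul₁ : ∀ w s : Equiv.Perm (Fin r), IsSimpleTransposition s →
      permLength (w * s) = permLength w + 1 → T w * T s = T (w * s))
    (hmul₂ : ∀ w s : Equiv.Perm (Fin r), IsSimpleTransposition s →
      permLength (w * s) + 1 = permLength w → T w * T s = q • T (w * s) + (q - 1) • T w)
    (l g : ℕ → ℕ) (hl : IsCompositionOf l r) (hlp : Antitone l)
    (hg : IsCompositionOf g r) (hdom : DomLE l g) (hne : l ≠ g)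
    (wl : Equiv.Perm (Fin r))
    (hwl : ∀ b : Fin r, boxPlace l (wl b) = Prod.swap (boxPlace (conjFn l) b))
    (v : H)
    (hv : v ∈ Submodule.span R {x : H | ∃ d ∈ Wlm (r := r) g l, x =
        ∑ᶠ u ∈ {u : Equiv.Perm (Fin r) | ∃ a ∈ YoungSubgroup (r := r) g,
          ∃ c ∈ YoungSubgroup (r := r) l, u = a * d * c}, T u}) :
    (∀ h : H, v * (T wl *
        (∑ᶠ u ∈ YoungSubgroup (r := r) (conjFn l),
          ((((-hq.unit)⁻¹ ^ permLength u : Rˣ) : R)) • T u) * h) = 0) ∧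
    (∀ (ε : H →ₗ[R] R) (h : H), ε (v * (T wl *
        (∑ᶠ u ∈ YoungSubgroup (r := r) (conjFn l),
          ((((-hq.unit)⁻¹ ^ permLength u : Rˣ) : R)) • T u) * h)) = 0) := by
  have hqc : q * ((((-hq.unit)⁻¹ : Rˣ) : R)) = -1 := by
    have h1 : (((-hq.unit)⁻¹ * (-hq.unit) : Rˣ) : R) = 1 := by
      rw [inv_mul_cancel, Units.val_one]
    rw [Units.val_mul, Units.val_neg, IsUnit.unit_spec] at h1
    linear_combination -h1
  have hYfin : (∑ᶠ u ∈ YoungSubgroup (r := r) (conjFn l),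
        ((((-hq.unit)⁻¹ ^ permLength u : Rˣ) : R)) • T u) =
      ∑ u ∈ YS (r := r) (conjFn l), ((((-hq.unit)⁻¹ ^ permLength u : Rˣ) : R)) • T u := by
    rw [← (Set.toFinite (YoungSubgroup (r := r) (conjFn l))).coe_toFinset,
      finsum_mem_coe_finset]
    rfl
  have hY : ∀ m : H, (∑ π ∈ YS (r := r) g, T π) * m *
      (∑ u ∈ YS (r := r) (conjFn l), ((((-hq.unit)⁻¹ ^ permLength u : Rˣ) : R)) • T u) = 0 :=
    fun m => master_general q T hone hmul₁ hmul₂ hspan hl hlp hg hdom hne (-hq.unit)⁻¹ hqc m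
  have hzero : v * (T wl *
      (∑ u ∈ YS (r := r) (conjFn l), ((((-hq.unit)⁻¹ ^ permLength u : Rˣ) : R)) • T u)) = 0 := by
    induction hv using Submodule.span_induction with
    | mem x hx =>
      obtain ⟨d, hd, hxeq⟩ := hx
      subst hxeq
      rw [finsum_mem_set_eq]
      apply claimC q T hone hmul₁ hmul₂ hg _ hY _ _ rfl ?_ (T wl)
      intro π hπ u hu
      rw [Set.Finite.mem_toFinset] at hu ⊢
      obtain ⟨a, ha, c', hc', rfl⟩ := hu
      exact ⟨π * a, young_mul hπ ha, c', hc', by rw [← mul_assoc, ← mul_assoc]⟩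
    | zero => rw [zero_mul]
    | add x y hx hy ihx ihy => rw [add_mul, ihx, ihy, add_zero]
    | smul a x hx ihx => rw [smul_mul_assoc, ihx, smul_zero]
  have hfirst : ∀ h : H, v * (T wl *
      (∑ᶠ u ∈ YoungSubgroup (r := r) (conjFn l),
        ((((-hq.unit)⁻¹ ^ permLength u : Rˣ) : R)) • T u) * h) = 0 := by
    intro h
    rw [hYfin, ← mul_assoc v, hzero, zero_mul]
  exact ⟨hfirst, fun ε h => by rw [hfirst h, map_zero]⟩
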